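/- For a prime p, the natural density of the set of square-free positive integers divisible by p is 6/(π²(p+1)). -/

import Mathlib

open Filter Finset ArithmeticFunction Topology

private lemma key_dvd {a b d : ℕ} (ha : 0 < a) (hb : 0 < b) (hsa : Squarefree a)
    (hd : Squarefree d) (h : d ^ 2 ∣ b ^ 2 * a) : d ∣ b := by
  rw [← Nat.factorization_le_iff_dvd hd.ne_zero hb.ne', Finsupp.le_def]
  intro q
  by_cases hq : q.Prime
  · by_cases hqd : q ∣ d
    · have h1 : d.factorization q = 1 :=
        Nat.factorization_eq_one_of_squarefree hd hq hqd
      have h2 : (d ^ 2).factorization q ≤ (b ^ 2 * a).factorization q := by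
        exact (Nat.factorization_le_iff_dvd (pow_ne_zero 2 hd.ne_zero) (Nat.mul_ne_zero (pow_ne_zero 2 hb.ne') ha.ne')).mpr h q
      have h3 : (b ^ 2 * a).factorization q = 2 * b.factorization q + a.factorization q := by
        rw [Nat.factorization_mul (by positivity) ha.ne', Nat.factorization_pow]
        simp [mul_comm]
      have h4 : a.factorization q ≤ 1 := hsa.natFactorization_le_one q
      have h5 : (d ^ 2).factorization q = 2 := by
        rw [Nat.factorization_pow]; simp [h1]
      omega
    · simp [Nat.factorization_eq_zero_of_not_dvd hqd]
  · simp [Nat.factorization_eq_zero_of_not_prime _ hq]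

private lemma aux_moebius_sum {N n : ℕ} (h1 : 1 ≤ n) (h2 : n ≤ N) :
    (if Squarefree n then (1 : ℤ) else 0)
      = ∑ d ∈ Icc 1 N, if d ^ 2 ∣ n then moebius d else 0 := by
  obtain ⟨a, b, ha, hb, hab, hsa⟩ := Nat.sq_mul_squarefree_of_pos h1
  have hbn : b ≤ n := by nlinarith
  have hsub : b.divisors ⊆ Icc 1 N := by
    intro d hd
    obtain ⟨hdb, -⟩ := Nat.mem_divisors.mp hd
    exact mem_Icc.mpr ⟨Nat.one_le_iff_ne_zero.mpr (fun h0 => by simp [h0] at hdb; omega),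
      le_trans (Nat.le_of_dvd hb hdb) (le_trans hbn h2)⟩
  rw [← Finset.sum_subset hsub ?_]
  · have hmain : ∀ d ∈ b.divisors, (if d ^ 2 ∣ n then (moebius d : ℤ) else 0) = moebius d := by
      intro d hd
      obtain ⟨hdb, -⟩ := Nat.mem_divisors.mp hd
      rw [if_pos]
      exact dvd_trans (pow_dvd_pow_of_dvd hdb 2) (Dvd.intro a hab)
    rw [Finset.sum_congr rfl hmain]
    have hz := ArithmeticFunction.coe_mul_zeta_apply (f := (moebius : ArithmeticFunction ℤ)) (x := b)
    rw [ArithmeticFunction.moebius_mul_coe_zeta, ArithmeticFunction.one_apply] at hz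
    rw [← hz]
    congr 1
    · -- Squarefree n = (b = 1)
      simp only [eq_iff_iff]
      constructor
      · intro hsn
        exact Nat.isUnit_iff.mp (hsn b (by rw [← hab]; exact Dvd.intro a (by ring)))
      · intro hb1
        rw [← hab, hb1, one_pow, one_mul]; exact hsa
  · intro d hd hnd
    by_cases hsd : Squarefree d
    · by_cases hdvd : d ^ 2 ∣ n
      · exfalso
        exact hnd (Nat.mem_divisors.mpr ⟨key_dvd ha hb hsa hsd (hab ▸ hdvd), hb.ne'⟩)
      · rw [if_neg hdvd]
    · simp [ArithmeticFunction.moebius_eq_zero_of_not_squarefree hsd]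


open Filter Finset ArithmeticFunction

private lemma count_eq (p : ℕ) (hp : p.Prime) (N : ℕ) :
    ((((Icc 1 N).filter (fun n => Squarefree n ∧ p ∣ n)).card : ℤ))
      = ∑ d ∈ Icc 1 N, (moebius d : ℤ) * ((N / Nat.lcm (d ^ 2) p : ℕ) : ℤ) := by
  have step1 : ((((Icc 1 N).filter (fun n => Squarefree n ∧ p ∣ n)).card : ℤ))
      = ∑ n ∈ Icc 1 N, if Squarefree n ∧ p ∣ n then (1 : ℤ) else 0 := by
    rw [Finset.card_filter]
    push_cast
    exact Finset.sum_congr rfl fun n _ => by split <;> simp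
  rw [step1]
  have step2 : ∀ n ∈ Icc 1 N, (if Squarefree n ∧ p ∣ n then (1 : ℤ) else 0)
      = ∑ d ∈ Icc 1 N, if d ^ 2 ∣ n ∧ p ∣ n then (moebius d : ℤ) else 0 := by
    intro n hn
    obtain ⟨h1, h2⟩ := mem_Icc.mp hn
    by_cases hpn : p ∣ n
    · simp only [hpn, and_true]
      exact aux_moebius_sum h1 h2
    · simp [hpn]
  rw [Finset.sum_congr rfl step2, Finset.sum_comm]
  refine Finset.sum_congr rfl fun d _ => ?_
  have hcond : ∀ n : ℕ, (d ^ 2 ∣ n ∧ p ∣ n) ↔ Nat.lcm (d ^ 2) p ∣ n := fun n =>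
    (Nat.lcm_dvd_iff).symm
  calc (∑ n ∈ Icc 1 N, if d ^ 2 ∣ n ∧ p ∣ n then (moebius d : ℤ) else 0)
      = ∑ n ∈ Icc 1 N, if Nat.lcm (d ^ 2) p ∣ n then (moebius d : ℤ) else 0 := by
        refine Finset.sum_congr rfl fun n _ => ?_
        simp only [hcond]
    _ = ∑ n ∈ (Icc 1 N).filter (fun n => Nat.lcm (d ^ 2) p ∣ n), (moebius d : ℤ) := by
        rw [Finset.sum_filter]
    _ = (((Icc 1 N).filter (fun n => Nat.lcm (d ^ 2) p ∣ n)).card : ℤ) * moebius d := by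
        rw [Finset.sum_const, nsmul_eq_mul]
    _ = (moebius d : ℤ) * ((N / Nat.lcm (d ^ 2) p : ℕ) : ℤ) := by
        rw [mul_comm]
        congr 2
        have : Icc 1 N = Ioc 0 N := rfl
        rw [this]
        exact Nat.Ioc_filter_dvd_card_eq_div N _

open Complex in
private lemma moebius_tsum_sq :
    ∑' d : ℕ, (moebius d : ℝ) / (d : ℝ) ^ 2 = 6 / Real.pi ^ 2 := by
  have hpi : Real.pi ≠ 0 := Real.pi_ne_zero
  have hs : (1 : ℝ) < (2 : ℂ).re := by norm_num
  have hz2 : LSeries (fun n => (ArithmeticFunction.zeta n : ℂ)) 2 = (Real.pi : ℂ) ^ 2 / 6 := by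
    rw [LSeries_zeta_eq_riemannZeta hs, riemannZeta_two]
  have hmul := LSeries_zeta_mul_Lseries_moebius (s := 2) hs
  rw [hz2] at hmul
  have hpic : (Real.pi : ℂ) ^ 2 ≠ 0 := by
    simpa using pow_ne_zero 2 (Complex.ofReal_ne_zero.mpr hpi)
  have hLmu : LSeries (fun n => (moebius n : ℂ)) 2 = 6 / (Real.pi : ℂ) ^ 2 := by
    field_simp at hmul ⊢
    linear_combination hmul
  have hterm : ∀ n : ℕ, LSeries.term (fun n => (moebius n : ℂ)) 2 n
      = ((moebius n : ℝ) / (n : ℝ) ^ 2 : ℝ) := by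
    intro n
    rcases eq_or_ne n 0 with rfl | hn
    · simp [LSeries.term]
    · rw [LSeries.term_of_ne_zero hn, show ((2 : ℂ)) = ((2 : ℕ) : ℂ) by norm_num,
        Complex.cpow_natCast]
      push_cast
      ring
  have : ((∑' d : ℕ, (moebius d : ℝ) / (d : ℝ) ^ 2 : ℝ) : ℂ) = 6 / (Real.pi : ℂ) ^ 2 := by
    rw [Complex.ofReal_tsum]
    rw [← hLmu, LSeries]
    exact tsum_congr fun n => (hterm n).symm
  have h6 : ((6 / Real.pi ^ 2 : ℝ) : ℂ) = 6 / (Real.pi : ℂ) ^ 2 := by push_cast; ring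
  exact Complex.ofReal_injective (by rw [this, h6])

private noncomputable def wfun (p : ℕ) (d : ℕ) : ℝ := if p ∣ d then 0 else (moebius d : ℝ) / (d : ℝ) ^ 2
private noncomputable def ufun (p : ℕ) (d : ℕ) : ℝ := if p ∣ d then (moebius d : ℝ) / (d : ℝ) ^ 2 else 0

private lemma habs_mu (d : ℕ) : |(moebius d : ℝ)| ≤ 1 := by
  exact_mod_cast ArithmeticFunction.abs_moebius_le_one (n := d)

private lemma hbound_summable : Summable (fun d : ℕ => 1 / (d : ℝ) ^ 2) :=
  Real.summable_one_div_nat_pow.mpr one_lt_two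

private lemma hmono (d : ℕ) : ‖(moebius d : ℝ) / (d : ℝ) ^ 2‖ ≤ 1 / (d : ℝ) ^ 2 := by
  rcases eq_or_ne d 0 with rfl | hd
  · simp
  · have hd2 : (0 : ℝ) < (d : ℝ) ^ 2 := by positivity
    rw [norm_div, Real.norm_eq_abs, Real.norm_eq_abs, abs_of_pos hd2]
    gcongr
    exact habs_mu d

private lemma wfun_summable (p : ℕ) : Summable (wfun p) := by
  refine hbound_summable.of_norm_bounded fun d => ?_
  by_cases h : p ∣ d
  · simp only [wfun, if_pos h, norm_zero]; positivity
  · simpa [wfun, h] using hmono d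

private lemma ufun_summable (p : ℕ) : Summable (ufun p) := by
  refine hbound_summable.of_norm_bounded fun d => ?_
  by_cases h : p ∣ d
  · simpa [ufun, h] using hmono d
  · simp only [ufun, if_neg h, norm_zero]; positivity

private lemma lcm_cast_le (p : ℕ) (hp : p.Prime) {d : ℕ} (hd : d ≠ 0) :
    (d : ℝ) ^ 2 ≤ (Nat.lcm (d ^ 2) p : ℝ) := by
  have h2 : Nat.lcm (d ^ 2) p ≠ 0 := Nat.lcm_ne_zero (pow_ne_zero 2 hd) hp.ne_zero
  have := Nat.le_of_dvd (Nat.pos_of_ne_zero h2) (Nat.dvd_lcm_left (d ^ 2) p)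
  exact_mod_cast this

private lemma gfun_norm_le (p : ℕ) (hp : p.Prime) (d : ℕ) :
    ‖(moebius d : ℝ) / (Nat.lcm (d ^ 2) p : ℝ)‖ ≤ 1 / (d : ℝ) ^ 2 := by
  rcases eq_or_ne d 0 with rfl | hd
  · simp
  · have hd2 : (0 : ℝ) < (d : ℝ) ^ 2 := by positivity
    rw [norm_div, Real.norm_eq_abs, Real.norm_eq_abs,
      abs_of_nonneg (by positivity : (0 : ℝ) ≤ (Nat.lcm (d ^ 2) p : ℝ))]
    exact div_le_div₀ zero_le_one (habs_mu d) hd2 (lcm_cast_le p hp hd)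

private lemma gfun_summable (p : ℕ) (hp : p.Prime) :
    Summable (fun d : ℕ => (moebius d : ℝ) / (Nat.lcm (d ^ 2) p : ℝ)) :=
  hbound_summable.of_norm_bounded (gfun_norm_le p hp)

private lemma tsum_val (p : ℕ) (hp : p.Prime) :
    ∑' d : ℕ, (moebius d : ℝ) / (Nat.lcm (d ^ 2) p : ℝ)
      = 6 / (Real.pi ^ 2 * ((p : ℝ) + 1)) := by
  have hp0 : (0 : ℝ) < p := by exact_mod_cast hp.pos
  have hpne : (p : ℝ) ≠ 0 := hp0.ne'
  have hWsum := wfun_summable p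
  have hUsum := ufun_summable p
  -- W + U = S
  have hWU : (∑' d, wfun p d) + (∑' d, ufun p d) = 6 / Real.pi ^ 2 := by
    rw [← moebius_tsum_sq, ← Summable.tsum_add hWsum hUsum]
    exact tsum_congr fun d => by by_cases h : p ∣ d <;> simp [wfun, ufun, h]
  -- G = W/p + U
  have hG2 : (∑' d : ℕ, (moebius d : ℝ) / (Nat.lcm (d ^ 2) p : ℝ))
      = (∑' d, wfun p d) / p + ∑' d, ufun p d := by
    have h1 : ∀ d : ℕ, (moebius d : ℝ) / (Nat.lcm (d ^ 2) p : ℝ) = wfun p d / p + ufun p d := by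
      intro d
      rcases eq_or_ne d 0 with rfl | hd
      · simp [wfun, ufun]
      by_cases h : p ∣ d
      · have hlcm : Nat.lcm (d ^ 2) p = d ^ 2 :=
          Nat.dvd_antisymm (Nat.lcm_dvd dvd_rfl (h.trans (dvd_pow_self d two_ne_zero)))
            (Nat.dvd_lcm_left _ _)
        simp [wfun, ufun, h, hlcm]
      · have hco : Nat.Coprime (d ^ 2) p :=
          (Nat.Coprime.pow_left 2 ((hp.coprime_iff_not_dvd.mpr h).symm))
        have hlcm : Nat.lcm (d ^ 2) p = d ^ 2 * p := Nat.Coprime.lcm_eq_mul hco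
        have hd2 : ((d : ℝ)) ^ 2 ≠ 0 := by positivity
        simp only [wfun, ufun, if_neg h, hlcm]
        push_cast
        field_simp
        ring
    rw [tsum_congr h1, Summable.tsum_add (hWsum.div_const p) hUsum, tsum_div_const]
  -- U = -(1/p^2) W
  have hU : (∑' d, ufun p d) = -(1 / (p : ℝ) ^ 2) * ∑' d, wfun p d := by
    have hinj : Function.Injective (fun e : ℕ => p * e) := fun a b hab => by
      exact Nat.eq_of_mul_eq_mul_left hp.pos hab
    have hri : ∑' e, ufun p (p * e) = ∑' d, ufun p d := by
      apply hinj.tsum_eq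
      intro x hx
      by_cases hdx : p ∣ x
      · obtain ⟨c, rfl⟩ := hdx; exact ⟨c, rfl⟩
      · exact absurd (by simp [ufun, hdx]) hx
    rw [← hri]
    have h2 : ∀ e : ℕ, ufun p (p * e) = -(1 / (p : ℝ) ^ 2) * wfun p e := by
      intro e
      rcases eq_or_ne e 0 with rfl | he
      · simp [ufun, wfun]
      by_cases hpe : p ∣ e
      · have hnsq : ¬ Squarefree (p * e) := by
          intro hsq
          exact hp.not_isUnit (hsq p (mul_dvd_mul_left p hpe))
        simp [ufun, wfun, hpe, ArithmeticFunction.moebius_eq_zero_of_not_squarefree hnsq]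
      · have hco : Nat.Coprime p e := hp.coprime_iff_not_dvd.mpr hpe
        have hmul : moebius (p * e) = moebius p * moebius e :=
          ArithmeticFunction.isMultiplicative_moebius.map_mul_of_coprime hco
        have hmp : moebius p = -1 := ArithmeticFunction.moebius_apply_prime hp
        have hppe : p ∣ p * e := Dvd.intro e rfl
        have hpr : (0:ℝ) < p := by exact_mod_cast hp.pos
        have her : (0:ℝ) < e := by exact_mod_cast Nat.pos_of_ne_zero he
        simp only [ufun, wfun, if_pos hppe, if_neg hpe, hmul, hmp]
        push_cast
        ring
    rw [tsum_congr h2, tsum_mul_left]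
  -- final algebra
  set W := ∑' d, wfun p d with hW_def
  have hSW : W - W / (p : ℝ) ^ 2 = 6 / Real.pi ^ 2 := by
    rw [← hWU, hU]; ring
  have hp1 : ((p : ℝ) + 1) ≠ 0 := by positivity
  have hfinal : (∑' d : ℕ, (moebius d : ℝ) / (Nat.lcm (d ^ 2) p : ℝ)) * ((p : ℝ) + 1)
      = 6 / Real.pi ^ 2 := by
    rw [hG2, hU, ← hSW]
    field_simp
    ring
  have := eq_div_of_mul_eq hp1 hfinal
  rw [this, div_div]

private lemma nat_div_cast_tendsto {L : ℕ} (hL : 0 < L) :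
    Tendsto (fun N : ℕ => ((N / L : ℕ) : ℝ) / (N : ℝ)) atTop (𝓝 (1 / (L : ℝ))) := by
  have hLr : (0 : ℝ) < L := by exact_mod_cast hL
  apply tendsto_of_tendsto_of_tendsto_of_le_of_le'
    (g := fun N : ℕ => 1 / (L : ℝ) - 1 / (N : ℝ)) (h := fun _ : ℕ => 1 / (L : ℝ))
  · simpa using tendsto_const_nhds.sub (tendsto_one_div_atTop_nhds_zero_nat (𝕜 := ℝ))
  · exact tendsto_const_nhds
  · filter_upwards [eventually_ge_atTop 1] with N hN
    have hNr : (0 : ℝ) < N := by exact_mod_cast hN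
    have key : (N : ℝ) - L ≤ (L : ℝ) * ((N / L : ℕ) : ℝ) := by
      have h1 : (L : ℝ) * ((N / L : ℕ) : ℝ) + ((N % L : ℕ) : ℝ) = N := by
        exact_mod_cast Nat.div_add_mod N L
      have h2 : ((N % L : ℕ) : ℝ) < L := by exact_mod_cast Nat.mod_lt _ hL
      linarith
    have h3 : ((N : ℝ) / L - 1) ≤ ((N / L : ℕ) : ℝ) := by
      rw [sub_le_iff_le_add, div_le_iff₀ hLr]
      linarith
    calc 1 / (L : ℝ) - 1 / N = ((N : ℝ) / L - 1) / N := by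
          field_simp
        _ ≤ ((N / L : ℕ) : ℝ) / N := by gcongr
  · filter_upwards [eventually_ge_atTop 1] with N hN
    have hNr : (0 : ℝ) < N := by exact_mod_cast hN
    calc ((N / L : ℕ) : ℝ) / N ≤ ((N : ℝ) / L) / N := by gcongr; exact Nat.cast_div_le
      _ = 1 / L := by field_simp

theorem squarefree_div_p_density (p : ℕ) (hp : p.Prime) :
    Tendsto (fun N : ℕ =>
      (((Finset.Icc 1 N).filter (fun n => Squarefree n ∧ p ∣ n)).card : ℝ) / N)
      atTop (nhds (6 / (Real.pi ^ 2 * (p + 1)))) := by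
  set F : ℕ → ℕ → ℝ :=
    fun N d => (moebius d : ℝ) * ((N / Nat.lcm (d ^ 2) p : ℕ) : ℝ) / N with hF_def
  have hmain : Tendsto (fun N : ℕ => ∑' d : ℕ, F N d) atTop
      (𝓝 (∑' d : ℕ, (moebius d : ℝ) / (Nat.lcm (d ^ 2) p : ℝ))) := by
    apply tendsto_tsum_of_dominated_convergence hbound_summable
    · intro d
      rcases eq_or_ne d 0 with rfl | hd
      · simpa [hF_def] using tendsto_const_nhds
      · have hL : 0 < Nat.lcm (d ^ 2) p :=
          Nat.pos_of_ne_zero (Nat.lcm_ne_zero (pow_ne_zero 2 hd) hp.ne_zero)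
        have hcore := (nat_div_cast_tendsto hL).const_mul ((moebius d : ℝ))
        have heq : (fun N : ℕ => (moebius d : ℝ) * (((N / Nat.lcm (d ^ 2) p : ℕ) : ℝ) / N))
            = fun N : ℕ => F N d := by
          funext N; simp [hF_def, mul_div_assoc]
        rw [heq] at hcore
        simpa [mul_one_div, div_eq_mul_inv] using hcore
    · filter_upwards [eventually_ge_atTop 1] with N hN d
      rcases eq_or_ne d 0 with rfl | hd
      · simp [hF_def]
      · have hNr : (0 : ℝ) < N := by exact_mod_cast hN
        have hL : 0 < Nat.lcm (d ^ 2) p :=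
          Nat.pos_of_ne_zero (Nat.lcm_ne_zero (pow_ne_zero 2 hd) hp.ne_zero)
        have hLr : (0 : ℝ) < (Nat.lcm (d ^ 2) p : ℝ) := by exact_mod_cast hL
        have hd2 : (0 : ℝ) < (d : ℝ) ^ 2 := by positivity
        have h1 : ((N / Nat.lcm (d ^ 2) p : ℕ) : ℝ) / N ≤ 1 / (d : ℝ) ^ 2 := by
          calc ((N / Nat.lcm (d ^ 2) p : ℕ) : ℝ) / N ≤ ((N : ℝ) / (Nat.lcm (d ^ 2) p : ℝ)) / N := by
                gcongr; exact Nat.cast_div_le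
            _ = 1 / (Nat.lcm (d ^ 2) p : ℝ) := by field_simp
            _ ≤ 1 / (d : ℝ) ^ 2 := one_div_le_one_div_of_le hd2 (lcm_cast_le p hp hd)
        have h0 : (0 : ℝ) ≤ ((N / Nat.lcm (d ^ 2) p : ℕ) : ℝ) / N := by positivity
        calc ‖F N d‖ = |(moebius d : ℝ)| * (((N / Nat.lcm (d ^ 2) p : ℕ) : ℝ) / N) := by
              rw [hF_def]
              simp only [mul_div_assoc, norm_mul, Real.norm_eq_abs, abs_of_nonneg h0]
          _ ≤ 1 * (1 / (d : ℝ) ^ 2) := by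
              exact mul_le_mul (habs_mu d) h1 h0 zero_le_one
          _ = 1 / (d : ℝ) ^ 2 := one_mul _
  rw [tsum_val p hp] at hmain
  apply hmain.congr'
  filter_upwards [eventually_ge_atTop 1] with N hN
  have hts : ∑' d : ℕ, F N d = ∑ d ∈ Icc 1 N, F N d := by
    apply tsum_eq_sum
    intro d hd
    rcases eq_or_ne d 0 with rfl | hd0
    · simp [hF_def]
    · have hdN : N < d := by
        have : ¬ (1 ≤ d ∧ d ≤ N) := fun h => hd (mem_Icc.mpr h)
        omega
      have hL2 : N < Nat.lcm (d ^ 2) p := by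
        have hdd : d ≤ d ^ 2 := Nat.le_self_pow two_ne_zero d
        have hL : Nat.lcm (d ^ 2) p ≠ 0 := Nat.lcm_ne_zero (pow_ne_zero 2 hd0) hp.ne_zero
        have := Nat.le_of_dvd (Nat.pos_of_ne_zero hL) (Nat.dvd_lcm_left (d ^ 2) p)
        omega
      simp [hF_def, Nat.div_eq_of_lt hL2]
  rw [hts, hF_def]
  have hcount : ((((Icc 1 N).filter (fun n => Squarefree n ∧ p ∣ n)).card : ℝ))
      = ∑ d ∈ Icc 1 N, (moebius d : ℝ) * ((N / Nat.lcm (d ^ 2) p : ℕ) : ℝ) := by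
    have h := congrArg (fun z : ℤ => (z : ℝ)) (count_eq p hp N)
    push_cast at h
    exact h
  rw [← Finset.sum_div, ← hcount]
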